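/- arXiv:2412.01641 — 3 statements merged into one kernel-verified Lean document; each statement's English description precedes it below -/
import Mathlib

section
/- Let p and q be coprime positive integers and let B be an h×n matrix over ℤ/qℤ. Define Λ_q^⊥(B) = {x ∈ ℤ^n : B·(x mod q) = 0 in (ℤ/qℤ)^h}, an additive subgroup of ℤ^n. If (b_1,…,b_n) is a ℤ-basis of Λ_q^⊥(B), then (p·b_1,…,p·b_n) is a ℤ-basis of the additive subgroup (p·ℤ^n) ∩ Λ_q^⊥(B). -/
open Matrix

/-- If `(b₁, …, bₙ)` is a ℤ-basis of `Λ_q^⊥(B) = {x ∈ ℤⁿ : B (x mod q) = 0}` and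
`p` is coprime to `q`, then `(p b₁, …, p bₙ)` is a ℤ-basis of `(p ℤⁿ) ∩ Λ_q^⊥(B)`
(step (3) of the Sign algorithm): each `p bᵢ` belongs to the intersection, and
every element of the intersection is a unique integer linear combination of them. -/
theorem smul_basis_of_inter (p q h n : ℕ) (hp : 0 < p) (hq : 0 < q)
    (hpq : Nat.Coprime p q) (B : Matrix (Fin h) (Fin n) (ZMod q))
    (b : Fin n → (Fin n → ℤ))
    (hmem : ∀ i, B.mulVec (fun j => ((b i j : ℤ) : ZMod q)) = 0)
    (hbasis : ∀ x : Fin n → ℤ, B.mulVec (fun j => ((x j : ℤ) : ZMod q)) = 0 →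
      ∃! c : Fin n → ℤ, x = ∑ i, c i • b i) :
    (∀ i, (∃ y : Fin n → ℤ, (p : ℤ) • b i = (p : ℤ) • y) ∧
        B.mulVec (fun j => ((((p : ℤ) • b i) j : ℤ) : ZMod q)) = 0) ∧
      ∀ x : Fin n → ℤ, (∃ y : Fin n → ℤ, x = (p : ℤ) • y) →
        B.mulVec (fun j => ((x j : ℤ) : ZMod q)) = 0 →
        ∃! c : Fin n → ℤ, x = ∑ i, c i • ((p : ℤ) • b i) := by
  have hpunit : IsUnit ((p : ℤ) : ZMod q) := by
    rw [Int.cast_natCast]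
    exact (ZMod.isUnit_iff_coprime p q).mpr hpq
  constructor
  · intro i
    refine ⟨⟨b i, rfl⟩, ?_⟩
    have : (fun j => ((((p : ℤ) • b i) j : ℤ) : ZMod q))
        = ((p : ℤ) : ZMod q) • (fun j => ((b i j : ℤ) : ZMod q)) := by
      funext j
      simp [Pi.smul_apply, Int.cast_mul, mul_comm]
    rw [this, mulVec_smul, hmem i, smul_zero]
  · rintro x ⟨y, rfl⟩ hx
    have hy : B.mulVec (fun j => ((y j : ℤ) : ZMod q)) = 0 := by
      have hxv : (fun j => ((((p : ℤ) • y) j : ℤ) : ZMod q))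
          = ((p : ℤ) : ZMod q) • (fun j => ((y j : ℤ) : ZMod q)) := by
        funext j
        simp [Pi.smul_apply, Int.cast_mul, mul_comm]
      rw [hxv, mulVec_smul] at hx
      obtain ⟨u, hu⟩ := hpunit
      have h2 := congrArg (fun v => (↑u⁻¹ : ZMod q) • v) hx
      simp only [← hu, smul_smul, Units.inv_mul, one_smul, smul_zero] at h2
      exact h2
    obtain ⟨c, hc, hcu⟩ := hbasis y hy
    have hpne : (p : ℤ) ≠ 0 := by exact_mod_cast hp.ne'
    refine ⟨c, ?_, ?_⟩
    · rw [hc, Finset.smul_sum]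
      exact Finset.sum_congr rfl fun i _ => smul_comm _ _ _
    · intro d hd
      apply hcu
      have : (p : ℤ) • y = (p : ℤ) • ∑ i, d i • b i := by
        rw [hd, Finset.smul_sum]
        exact Finset.sum_congr rfl fun i _ => (smul_comm _ _ _).symm
      exact smul_right_injective _ hpne this
end

section
/- Let p, q, k, n, h be positive integers and V > 0 a real number. Let B be an h×n matrix over ℤ/qℤ. For i = 1,…,k let σ_i ∈ ℤ^n, m_i ∈ (ℤ/pℤ)^n, α_i ∈ (ℤ/qℤ)^h, and c_i ∈ ℤ with |c_i| ≤ p/2. Assume for every i that ‖σ_i‖ ≤ V·√n (Euclidean norm), that σ_i mod p = m_i, and that B·(σ_i mod q) = α_i. Then σ := Σ_{i=1}^k c_i·σ_i satisfies: (1) ‖σ‖ ≤ k·(p/2)·V·√n; (2) σ mod p = Σ_{i=1}^k c_i·m_i in (ℤ/pℤ)^n; and (3) B·(σ mod q) = Σ_{i=1}^k c_i·α_i in (ℤ/qℤ)^h. -/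
open Matrix

/-- The Euclidean norm of an integer vector. -/
noncomputable def intNorm {n : ℕ} (x : Fin n → ℤ) : ℝ :=
  ‖(EuclideanSpace.equiv (Fin n) ℝ).symm (fun i => ((x i : ℤ) : ℝ))‖

/-- Correctness of the `Evaluate` algorithm (second half of Theorem 4.1): if each
signature `σᵢ` is short, reduces to `mᵢ` mod `p`, and satisfies `B (σᵢ mod q) = αᵢ`,
and the coefficients satisfy `|cᵢ| ≤ p/2`, then `σ = Σ cᵢ σᵢ` satisfies
`‖σ‖ ≤ k (p/2) V √n`, `σ mod p = Σ cᵢ mᵢ`, and `B (σ mod q) = Σ cᵢ αᵢ`. -/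
theorem evaluate_correct (p q k n h : ℕ) (hp : 0 < p) (hq : 0 < q) (hk : 0 < k)
    (hn : 0 < n) (hh : 0 < h) (V : ℝ) (hV : 0 < V)
    (B : Matrix (Fin h) (Fin n) (ZMod q))
    (σ : Fin k → (Fin n → ℤ)) (m : Fin k → (Fin n → ZMod p))
    (α : Fin k → (Fin h → ZMod q)) (c : Fin k → ℤ)
    (hc : ∀ i, (|c i| : ℝ) ≤ (p : ℝ) / 2)
    (hσnorm : ∀ i, intNorm (σ i) ≤ V * Real.sqrt n)
    (hσm : ∀ i, (fun j => ((σ i j : ℤ) : ZMod p)) = m i)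
    (hσα : ∀ i, B.mulVec (fun j => ((σ i j : ℤ) : ZMod q)) = α i) :
    intNorm (∑ i, c i • σ i) ≤ (k : ℝ) * ((p : ℝ) / 2) * V * Real.sqrt n ∧
      (fun j => ((((∑ i, c i • σ i) : Fin n → ℤ) j : ℤ) : ZMod p)) = ∑ i, c i • m i ∧
      B.mulVec (fun j => ((((∑ i, c i • σ i) : Fin n → ℤ) j : ℤ) : ZMod q))
        = ∑ i, c i • α i := by
  refine ⟨?_, ?_, ?_⟩
  · have key : ((EuclideanSpace.equiv (Fin n) ℝ).symm
        (fun j => (((∑ i, c i • σ i) j : ℤ) : ℝ)))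
        = ∑ i, (c i : ℝ) • (EuclideanSpace.equiv (Fin n) ℝ).symm
            (fun j => ((σ i j : ℤ) : ℝ)) := by
      have hfun : (fun j => (((∑ i, c i • σ i) j : ℤ) : ℝ))
          = ∑ i, (c i : ℝ) • (fun j => ((σ i j : ℤ) : ℝ)) := by
        funext j
        simp only [Finset.sum_apply, Pi.smul_apply, smul_eq_mul]
        push_cast
        rfl
      rw [hfun, map_sum]
      simp
    calc intNorm (∑ i, c i • σ i)
        = ‖∑ i, (c i : ℝ) • (EuclideanSpace.equiv (Fin n) ℝ).symm
            (fun j => ((σ i j : ℤ) : ℝ))‖ := by rw [intNorm, key]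
      _ ≤ ∑ i, ‖(c i : ℝ) • (EuclideanSpace.equiv (Fin n) ℝ).symm
            (fun j => ((σ i j : ℤ) : ℝ))‖ := norm_sum_le _ _
      _ ≤ ∑ _i : Fin k, ((p : ℝ) / 2) * (V * Real.sqrt n) := by
          apply Finset.sum_le_sum
          intro i _
          rw [norm_smul, Real.norm_eq_abs]
          have : ‖(EuclideanSpace.equiv (Fin n) ℝ).symm fun j => ((σ i j : ℤ) : ℝ)‖
              = intNorm (σ i) := rfl
          rw [this]
          apply mul_le_mul (hc i) (hσnorm i)
          · rw [intNorm]; exact norm_nonneg _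
          · positivity
      _ = (k : ℝ) * ((p : ℝ) / 2) * V * Real.sqrt n := by
          rw [Finset.sum_const, Finset.card_univ, Fintype.card_fin]
          push_cast; ring
  · funext j
    simp only [← hσm, Finset.sum_apply, Pi.smul_apply]
    simp only [smul_eq_mul, zsmul_eq_mul]
    push_cast
    rfl
  · have hfun : (fun j => (((∑ i, c i • σ i) j : ℤ) : ZMod q))
        = ∑ i, c i • (fun j => ((σ i j : ℤ) : ZMod q)) := by
      funext j
      simp only [Finset.sum_apply, Pi.smul_apply]
      simp only [smul_eq_mul, zsmul_eq_mul]
      push_cast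
      rfl
    rw [hfun]
    have : ∀ v : Fin n → ZMod q, B.mulVec v = B.mulVecLin v := fun _ => rfl
    rw [this, map_sum]
    refine Finset.sum_congr rfl fun i _ => ?_
    rw [LinearMap.map_smul_of_tower, ← hσα i]
    rfl
end

section
/- For every natural number n ≥ 1 and every x_0 ∈ ℤ^n, the sum S_n := Σ_{x ∈ ℤ^n} exp(−π·‖x‖²/n) converges and satisfies S_n ≥ 1 + 2n·e^{−π/n} + 2n(n−1)·e^{−2π/n} + (4/3)·n(n−1)(n−2)·e^{−3π/n}; consequently the discrete Gaussian probability of the single point x_0 with parameter s = √n satisfies exp(−π·‖x_0‖²/n) / S_n ≤ (2n·e^{−π/n} + 2n(n−1)·e^{−2π/n} + (4/3)·n(n−1)(n−2)·e^{−3π/n})^{−1}. -/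
set_option maxHeartbeats 1000000


open Real

lemma aux_cube_nonneg (n : ℕ) : 0 ≤ (n:ℝ) * ((n:ℝ)-1) * ((n:ℝ)-2) := by
  rcases n with _|_|m
  · norm_num
  · norm_num
  · have : (0:ℝ) ≤ m := Nat.cast_nonneg m
    push_cast
    nlinarith [mul_nonneg (mul_nonneg (by linarith : (0:ℝ) ≤ (m:ℝ)+2)
      (by linarith : (0:ℝ) ≤ (m:ℝ)+1)) this]

lemma aux_sq_nonneg (n : ℕ) : 0 ≤ (n:ℝ) * ((n:ℝ)-1) := by
  rcases n with _|m
  · norm_num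
  · have : (0:ℝ) ≤ m := Nat.cast_nonneg m
    push_cast
    nlinarith

lemma binom_lb (a : ℝ) (ha : 0 ≤ a) (n : ℕ) :
    1 + 2*(n:ℝ)*a + 2*(n:ℝ)*((n:ℝ)-1)*a^2 + (4/3)*(n:ℝ)*((n:ℝ)-1)*((n:ℝ)-2)*a^3
      ≤ (1 + 2*a)^n := by
  induction n with
  | zero => norm_num
  | succ n ih =>
      have h1 : 1 + 2*((n:ℝ)+1)*a + 2*((n:ℝ)+1)*(((n:ℝ)+1)-1)*a^2
          + (4/3)*((n:ℝ)+1)*(((n:ℝ)+1)-1)*(((n:ℝ)+1)-2)*a^3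
          ≤ (1 + 2*(n:ℝ)*a + 2*(n:ℝ)*((n:ℝ)-1)*a^2
            + (4/3)*(n:ℝ)*((n:ℝ)-1)*((n:ℝ)-2)*a^3) * (1 + 2*a) := by
        nlinarith [mul_nonneg (aux_cube_nonneg n) (pow_nonneg ha 4)]
      have h2 := mul_le_mul_of_nonneg_right ih (by linarith : (0:ℝ) ≤ 1 + 2*a)
      push_cast
      calc 1 + 2*((n:ℝ)+1)*a + 2*((n:ℝ)+1)*(((n:ℝ)+1)-1)*a^2
          + (4/3)*((n:ℝ)+1)*(((n:ℝ)+1)-1)*(((n:ℝ)+1)-2)*a^3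
          ≤ _ := h1
        _ ≤ (1+2*a)^n * (1+2*a) := h2
        _ = (1+2*a)^(n+1) := (pow_succ _ _).symm

lemma pi_prod_summable_tsum (f : ℤ → ℝ) (hf : Summable f) (h0 : ∀ k, 0 ≤ f k) (n : ℕ) :
    Summable (fun x : Fin n → ℤ => ∏ i, f (x i)) ∧
    ∑' x : Fin n → ℤ, ∏ i, f (x i) = (∑' k, f k) ^ n := by
  induction n with
  | zero =>
      constructor
      · exact Summable.of_finite
      · simp [tsum_fintype]
  | succ n ih =>
      have hg0 : ∀ y : Fin n → ℤ, 0 ≤ ∏ i, f (y i) :=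
        fun y => Finset.prod_nonneg fun i _ => h0 _
      have hF := Summable.mul_of_nonneg (f := f) (g := fun y : Fin n → ℤ => ∏ i, f (y i))
        hf ih.1 h0 hg0
      have hcomp : (fun x : Fin (n+1) → ℤ => ∏ i, f (x i))
            ∘ (Fin.consEquiv (fun _ : Fin (n+1) => ℤ))
          = fun p : ℤ × (Fin n → ℤ) => f p.1 * ∏ i, f (p.2 i) := by
        funext p
        simp [Fin.prod_univ_succ]
      have hs : Summable (fun x : Fin (n+1) → ℤ => ∏ i, f (x i)) := by
        rw [← Equiv.summable_iff (Fin.consEquiv (fun _ : Fin (n+1) => ℤ)), hcomp]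
        exact hF
      refine ⟨hs, ?_⟩
      have ht : ∑' x : Fin (n+1) → ℤ, ∏ i, f (x i)
          = ∑' p : ℤ × (Fin n → ℤ), f p.1 * ∏ i, f (p.2 i) := by
        rw [← Equiv.tsum_eq (Fin.consEquiv (fun _ : Fin (n+1) => ℤ))]
        exact tsum_congr fun p => congrFun hcomp p
      rw [ht, ← Summable.tsum_mul_tsum hf ih.1 hF, ih.2, pow_succ]
      ring
/-- The point-mass bound for the discrete Gaussian on `ℤⁿ` with parameter `s = √n`
(quantitative content of the proof of Lemma 3.4): the Gaussian sum
`Sₙ = Σ_{x ∈ ℤⁿ} exp(-π ‖x‖² / n)` converges, is bounded below by the contributions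
of the vectors of squared norm `0, 1, 2, 3`, and consequently every single point has
probability at most the reciprocal of that lower bound (minus the `1`). -/
theorem discrete_gaussian_point_mass_bound (n : ℕ) (hn : 1 ≤ n) (x₀ : Fin n → ℤ) :
    Summable (fun x : Fin n → ℤ =>
      Real.exp (-Real.pi * (∑ i, ((x i : ℤ) : ℝ) ^ 2) / n)) ∧
    1 + 2 * (n : ℝ) * Real.exp (-Real.pi / n)
        + 2 * (n : ℝ) * ((n : ℝ) - 1) * Real.exp (-2 * Real.pi / n)
        + (4 / 3) * (n : ℝ) * ((n : ℝ) - 1) * ((n : ℝ) - 2) * Real.exp (-3 * Real.pi / n)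
      ≤ ∑' x : Fin n → ℤ, Real.exp (-Real.pi * (∑ i, ((x i : ℤ) : ℝ) ^ 2) / n) ∧
    Real.exp (-Real.pi * (∑ i, ((x₀ i : ℤ) : ℝ) ^ 2) / n) /
        (∑' x : Fin n → ℤ, Real.exp (-Real.pi * (∑ i, ((x i : ℤ) : ℝ) ^ 2) / n))
      ≤ (2 * (n : ℝ) * Real.exp (-Real.pi / n)
          + 2 * (n : ℝ) * ((n : ℝ) - 1) * Real.exp (-2 * Real.pi / n)
          + (4 / 3) * (n : ℝ) * ((n : ℝ) - 1) * ((n : ℝ) - 2)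
            * Real.exp (-3 * Real.pi / n))⁻¹ := by
  have hn0 : (0:ℝ) < n := by positivity
  have hn1 : (1:ℝ) ≤ n := by exact_mod_cast hn
  set f : ℤ → ℝ := fun k => Real.exp (-Real.pi * ((k:ℝ))^2 / n) with hfdef
  have h0 : ∀ k, 0 ≤ f k := fun k => (Real.exp_pos _).le
  -- summability of the one-dimensional Gaussian
  have hgeom : Summable (fun m : ℕ => Real.exp (-Real.pi/n) ^ m) :=
    summable_geometric_of_lt_one (Real.exp_pos _).le
      (Real.exp_lt_one_iff.mpr (by
        have h := div_pos Real.pi_pos hn0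
        have : -Real.pi/(n:ℝ) = -(Real.pi/n) := neg_div _ _
        linarith))
  have hfn : Summable (fun m : ℕ => f (m:ℤ)) := by
    apply Summable.of_nonneg_of_le (fun m => h0 _) _ hgeom
    intro m
    rw [hfdef]
    simp only [Int.cast_natCast]
    rw [← Real.exp_nat_mul]
    apply Real.exp_le_exp.mpr
    have hm : (m:ℝ) ≤ (m:ℝ)^2 := by
      have := Nat.le_self_pow (two_ne_zero) m
      exact_mod_cast this
    rw [show (m:ℝ) * (-Real.pi/n) = -Real.pi * m / n by ring, div_le_div_iff₀ hn0 hn0]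
    nlinarith [mul_nonneg (mul_nonneg Real.pi_pos.le (sub_nonneg.mpr hm)) hn0.le]
  have hf : Summable f := by
    apply Summable.of_nat_of_neg hfn
    have : ∀ m : ℕ, f (-(m:ℤ)) = f (m:ℤ) := by
      intro m; rw [hfdef]; push_cast; rw [neg_sq]
    simpa [this] using hfn
  -- rewrite the n-dimensional Gaussian as a product
  have hfun : (fun x : Fin n → ℤ => Real.exp (-Real.pi * (∑ i, ((x i : ℤ) : ℝ) ^ 2) / n))
      = fun x => ∏ i, f (x i) := by
    funext x
    rw [hfdef]
    rw [← Real.exp_sum]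
    congr 1
    rw [← Finset.sum_div, ← Finset.mul_sum]
  obtain ⟨hS, hT⟩ := pi_prod_summable_tsum f hf h0 n
  set T : ℝ := ∑' k, f k with hTdef
  set a : ℝ := Real.exp (-Real.pi/n) with hadef
  have ha : 0 < a := Real.exp_pos _
  -- one-dimensional lower bound
  have hTlb : 1 + 2*a ≤ T := by
    have hsub := Summable.sum_le_tsum ({-1,0,1} : Finset ℤ) (fun k _ => h0 k) hf
    have hsum : ∑ k ∈ ({-1,0,1} : Finset ℤ), f k = 1 + 2*a := by
      rw [hfdef, hadef]
      norm_num [Finset.sum_insert, Finset.mem_insert]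
      ring
    rw [← hsum]; exact hsub
  -- exponential identities
  have e2 : Real.exp (-2*Real.pi/n) = a^2 := by
    rw [hadef, ← Real.exp_nat_mul]
    congr 1; push_cast; ring
  have e3 : Real.exp (-3*Real.pi/n) = a^3 := by
    rw [hadef, ← Real.exp_nat_mul]
    congr 1; push_cast; ring
  have hmain : 1 + 2 * (n : ℝ) * a + 2 * (n : ℝ) * ((n : ℝ) - 1) * a^2
      + (4 / 3) * (n : ℝ) * ((n : ℝ) - 1) * ((n : ℝ) - 2) * a^3
      ≤ ∑' x : Fin n → ℤ, Real.exp (-Real.pi * (∑ i, ((x i : ℤ) : ℝ) ^ 2) / n) := by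
    rw [hfun, hT]
    calc 1 + 2*(n:ℝ)*a + 2*(n:ℝ)*((n:ℝ)-1)*a^2 + (4/3)*(n:ℝ)*((n:ℝ)-1)*((n:ℝ)-2)*a^3
        ≤ (1 + 2*a)^n := binom_lb a ha.le n
      _ ≤ T^n := pow_le_pow_left₀ (by linarith) hTlb n
  refine ⟨hfun ▸ hS, by rw [e2, e3]; exact hmain, ?_⟩
  rw [e2, e3]
  set B : ℝ := 2 * (n : ℝ) * a + 2 * (n : ℝ) * ((n : ℝ) - 1) * a^2
      + (4 / 3) * (n : ℝ) * ((n : ℝ) - 1) * ((n : ℝ) - 2) * a^3 with hBdef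
  have hB : 0 < B := by
    have h1 : 0 < 2*(n:ℝ)*a := by positivity
    have h2 : 0 ≤ 2*(n:ℝ)*((n:ℝ)-1)*a^2 := by
      have := aux_sq_nonneg n; nlinarith [pow_nonneg ha.le 2]
    have h3 : 0 ≤ (4/3)*(n:ℝ)*((n:ℝ)-1)*((n:ℝ)-2)*a^3 := by
      have := aux_cube_nonneg n; nlinarith [pow_nonneg ha.le 3]
    rw [hBdef]; linarith
  have hS1 : 1 + B ≤ ∑' x : Fin n → ℤ,
      Real.exp (-Real.pi * (∑ i, ((x i : ℤ) : ℝ) ^ 2) / n) := by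
    rw [hBdef]
    calc 1 + (2 * (n : ℝ) * a + 2 * (n : ℝ) * ((n : ℝ) - 1) * a^2
        + (4 / 3) * (n : ℝ) * ((n : ℝ) - 1) * ((n : ℝ) - 2) * a^3)
        = 1 + 2 * (n : ℝ) * a + 2 * (n : ℝ) * ((n : ℝ) - 1) * a^2
          + (4 / 3) * (n : ℝ) * ((n : ℝ) - 1) * ((n : ℝ) - 2) * a^3 := by ring
      _ ≤ _ := hmain
  have hexp1 : Real.exp (-Real.pi * (∑ i, ((x₀ i : ℤ) : ℝ) ^ 2) / n) ≤ 1 := by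
    apply Real.exp_le_one_iff.mpr
    have hsq : 0 ≤ ∑ i, ((x₀ i : ℤ) : ℝ) ^ 2 := Finset.sum_nonneg fun i _ => sq_nonneg _
    apply div_nonpos_of_nonpos_of_nonneg _ hn0.le
    nlinarith [Real.pi_pos]
  have hBS : B ≤ ∑' x : Fin n → ℤ,
      Real.exp (-Real.pi * (∑ i, ((x i : ℤ) : ℝ) ^ 2) / n) := by linarith
  have := div_le_div₀ (zero_le_one) hexp1 hB hBS
  rwa [one_div] at this
end
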